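/- Consider a port-Hamiltonian descriptor system E ẋ = (J−R)x + (G−P)u, y = (G+P)ᵀx + (S+N)u with E = Eᵀ ≥ 0, [[J, G],[−Gᵀ, N]] skew-symmetric, and W = [[R, P],[Pᵀ, S]] ≥ 0. There exists F ∈ ℝᵐˣⁿ such that the closed-loop dissipation matrix W̃ = [[R̃, P̃],[P̃ᵀ, S]] with R̃ = R − ½[(G−P)F + Fᵀ(G−P)ᵀ] and P̃ = P + ½Fᵀ(S+N)ᵀ is positive definite (i.e., the closed-loop system is strictly passive) if and only if S > 0 and R + ½(G−P)(S+N)⁻¹(G+P)ᵀ + ½(G+P)(S+N)⁻ᵀ(G−P)ᵀ > 0. -/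

import Mathlib

/-!
Once `S > 0`, the closed-loop matrix `W̃` is positive definite iff its Schur complement
`R̃ - P̃ S⁻¹ P̃ᵀ` is. Put `A = S + N`; skew-symmetry of `N` gives `xᵀ A x = xᵀ S x`, so `A` is
invertible, and `A + Aᵀ = 2 S`. Completing the square then gives
`R̃ - P̃ S⁻¹ P̃ᵀ = T - Q S⁻¹ Qᵀ` with `Q = (G - P) A⁻¹ S + P̃`, where `T` is the matrix of the
claimed condition and does not depend on `F`. So any admissible `F` forces `T > 0`; conversely,
`P̃ = P + ½ Fᵀ Aᵀ` is affine in `F` with invertible coefficient, so `F` can be chosen with `Q = 0`.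
-/

open Matrix

namespace Matrix

theorem PosDef.toBlocks₂₂ {m n R : Type*} [Ring R] [PartialOrder R] [StarRing R]
    {M : Matrix (m ⊕ n) (m ⊕ n) R} (hM : M.PosDef) : M.toBlocks₂₂.PosDef :=
  hM.submatrix Sum.inr_injective

section Blocks

open scoped ComplexOrder

variable {m n 𝕜 : Type*} [Fintype m] [Fintype n] [DecidableEq m] [DecidableEq n] [RCLike 𝕜]

theorem PosDef.posDef_fromBlocks₂₂_iff (A : Matrix m m 𝕜) (B : Matrix m n 𝕜) {D : Matrix n n 𝕜}
    (hD : D.PosDef) [Invertible D] :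
    (fromBlocks A B Bᴴ D).PosDef ↔ (A - B * D⁻¹ * Bᴴ).PosDef := by
  have hdet : (fromBlocks A B Bᴴ D).det = D.det * (A - B * D⁻¹ * Bᴴ).det := by
    rw [det_fromBlocks₂₂, invOf_eq_nonsing_inv]
  constructor
  · intro h
    exact ((hD.fromBlocks₂₂ A B).1 h.posSemidef).posDef_iff_det_ne_zero.2
      (right_ne_zero_of_mul (hdet ▸ h.det_pos.ne'))
  · intro h
    exact ((hD.fromBlocks₂₂ A B).2 h.posSemidef).posDef_iff_det_ne_zero.2
      (hdet ▸ mul_ne_zero hD.det_pos.ne' h.det_pos.ne')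

theorem posDef_fromBlocks_iff_posDef_and_posDef_schur (A : Matrix m m 𝕜) (B : Matrix m n 𝕜)
    (D : Matrix n n 𝕜) :
    (fromBlocks A B Bᴴ D).PosDef ↔ D.PosDef ∧ (A - B * D⁻¹ * Bᴴ).PosDef := by
  refine ⟨fun h => ?_, fun ⟨hD, h⟩ => ?_⟩
  · have hD : D.PosDef := by simpa using h.toBlocks₂₂
    have := hD.isUnit.invertible
    exact ⟨hD, (hD.posDef_fromBlocks₂₂_iff A B).1 h⟩
  · have := hD.isUnit.invertible
    exact (hD.posDef_fromBlocks₂₂_iff A B).2 h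

end Blocks

theorem dotProduct_mulVec_self_eq_zero_of_transpose_eq_neg {n R : Type*} [Fintype n] [CommRing R]
    [IsAddTorsionFree R] {N : Matrix n n R} (hN : Nᵀ = -N) (x : n → R) : x ⬝ᵥ N *ᵥ x = 0 := by
  refine self_eq_neg.1 ?_
  calc x ⬝ᵥ N *ᵥ x = x ⬝ᵥ Nᵀ *ᵥ x := by rw [mulVec_transpose, dotProduct_mulVec, dotProduct_comm]
    _ = -(x ⬝ᵥ N *ᵥ x) := by rw [hN, neg_mulVec, dotProduct_neg]

theorem PosDef.isUnit_det_add_of_transpose_eq_neg {n K : Type*} [Fintype n] [DecidableEq n]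
    [Field K] [LinearOrder K] [IsStrictOrderedRing K] [StarRing K] [TrivialStar K]
    {S N : Matrix n n K} (hS : S.PosDef) (hN : Nᵀ = -N) : IsUnit (S + N).det := by
  rw [isUnit_iff_ne_zero, Ne, ← exists_mulVec_eq_zero_iff]
  rintro ⟨x, hx, hker⟩
  have hpos : 0 < x ⬝ᵥ S *ᵥ x := by simpa using hS.dotProduct_mulVec_pos hx
  have hzero : x ⬝ᵥ (S + N) *ᵥ x = 0 := by rw [hker, dotProduct_zero]
  rw [add_mulVec, dotProduct_add, dotProduct_mulVec_self_eq_zero_of_transpose_eq_neg hN] at hzero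
  exact hpos.ne' (by simpa using hzero)

theorem PosDef.of_posDef_sub_mul_inv_mul_transpose {m n K : Type*} [Finite m] [Fintype n]
    [DecidableEq n] [Field K] [PartialOrder K] [StarRing K] [TrivialStar K] [AddLeftMono K]
    {T : Matrix m m K} {S : Matrix n n K} {Q : Matrix m n K} (hS : S.PosDef)
    (h : (T - Q * S⁻¹ * Qᵀ).PosDef) : T.PosDef := by
  simpa [conjTranspose_eq_transpose_of_trivial] using
    h.add_posSemidef (hS.inv.posSemidef.mul_mul_conjTranspose_same Q)

end Matrix

section Feedback

variable {ι κ K : Type*} [Fintype κ] [Field K]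

theorem add_mul_inv_mul_transpose_add [DecidableEq κ] {S : Matrix κ κ K} (hS : IsUnit S.det)
    (hSsymm : Sᵀ = S) (C B : Matrix ι κ K) :
    (C * S + B) * S⁻¹ * (C * S + B)ᵀ = C * S * Cᵀ + C * Bᵀ + B * Cᵀ + B * S⁻¹ * Bᵀ := by
  rw [Matrix.add_mul, mul_nonsing_inv_cancel_right _ _ hS, transpose_add, transpose_mul, hSsymm]
  simp only [Matrix.add_mul, Matrix.mul_add, Matrix.mul_assoc, nonsing_inv_mul_cancel_left _ _ hS]
  abel

theorem feedback_terms_cancel [CharZero K] (R : Matrix ι ι K) (G P C : Matrix ι κ K)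
    (A S : Matrix κ κ K) (F : Matrix κ ι K) (hC : C * A = G - P) (hAS : A + Aᵀ = (2 : K) • S) :
    R - (1 / 2 : K) • ((G - P) * F + Fᵀ * (G - P)ᵀ) + C * S * Cᵀ
        + C * (P + (1 / 2 : K) • Fᵀ * Aᵀ)ᵀ + (P + (1 / 2 : K) • Fᵀ * Aᵀ) * Cᵀ
      = R + (1 / 2 : K) • (C * (G + P)ᵀ) + (1 / 2 : K) • ((G + P) * Cᵀ) := by
  obtain rfl : G = C * A + P := by rw [hC, sub_add_cancel]
  obtain rfl : S = (1 / 2 : K) • (A + Aᵀ) := by rw [hAS, smul_smul]; norm_num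
  simp only [transpose_add, transpose_mul, transpose_smul, transpose_transpose,
    add_sub_cancel_right, Matrix.mul_add, Matrix.add_mul, Matrix.mul_smul, Matrix.smul_mul,
    Matrix.mul_assoc, smul_add]
  module

theorem closedLoop_schur_complement_eq [DecidableEq κ] [CharZero K] {A S : Matrix κ κ K}
    (hA : IsUnit A.det) (hS : IsUnit S.det) (hSsymm : Sᵀ = S) (hAS : A + Aᵀ = (2 : K) • S)
    (R : Matrix ι ι K) (G P : Matrix ι κ K) (F : Matrix κ ι K) :
    R - (1 / 2 : K) • ((G - P) * F + Fᵀ * (G - P)ᵀ)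
        - (P + (1 / 2 : K) • Fᵀ * Aᵀ) * S⁻¹ * (P + (1 / 2 : K) • Fᵀ * Aᵀ)ᵀ
      = R + (1 / 2 : K) • ((G - P) * A⁻¹ * (G + P)ᵀ) + (1 / 2 : K) • ((G + P) * A⁻¹ᵀ * (G - P)ᵀ)
        - ((G - P) * A⁻¹ * S + (P + (1 / 2 : K) • Fᵀ * Aᵀ)) * S⁻¹
          * ((G - P) * A⁻¹ * S + (P + (1 / 2 : K) • Fᵀ * Aᵀ))ᵀ := by
  have hC : (G - P) * A⁻¹ * A = G - P := nonsing_inv_mul_cancel_right _ _ hA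
  rw [show (G + P) * A⁻¹ᵀ * (G - P)ᵀ = (G + P) * ((G - P) * A⁻¹)ᵀ by
      rw [transpose_mul, Matrix.mul_assoc],
    eq_sub_iff_add_eq, add_mul_inv_mul_transpose_add hS hSsymm,
    ← feedback_terms_cancel R G P _ A S F hC hAS]
  abel

theorem exists_half_smul_transpose_mul_eq [DecidableEq κ] [CharZero K] {A : Matrix κ κ K}
    (hA : IsUnit A.det) (Y : Matrix ι κ K) :
    ∃ F : Matrix κ ι K, (1 / 2 : K) • Fᵀ * Aᵀ = Y :=
  ⟨(2 : K) • (Y * A⁻¹ᵀ)ᵀ, by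
    rw [transpose_smul, transpose_transpose, smul_smul, Matrix.smul_mul, Matrix.mul_assoc,
      ← transpose_mul, mul_nonsing_inv _ hA]
    norm_num⟩

end Feedback

theorem ph_feedback_strict_passivity_iff_general
    {n m : ℕ}
    (J R : Matrix (Fin n) (Fin n) ℝ)
    (G P : Matrix (Fin n) (Fin m) ℝ)
    (S N : Matrix (Fin m) (Fin m) ℝ)
    (hskew : (fromBlocks J G (-Gᵀ) N)ᵀ = -(fromBlocks J G (-Gᵀ) N)) :
    (∃ F : Matrix (Fin m) (Fin n) ℝ,
      (fromBlocks
          (R - (1 / 2 : ℝ) • ((G - P) * F + Fᵀ * (G - P)ᵀ))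
          (P + (1 / 2 : ℝ) • Fᵀ * (S + N)ᵀ)
          (P + (1 / 2 : ℝ) • Fᵀ * (S + N)ᵀ)ᵀ
          S).PosDef)
    ↔
    (S.PosDef ∧
      (R + (1 / 2 : ℝ) • ((G - P) * (S + N)⁻¹ * (G + P)ᵀ)
         + (1 / 2 : ℝ) • ((G + P) * ((S + N)⁻¹)ᵀ * (G - P)ᵀ)).PosDef) := by
  have hN : Nᵀ = -N := by
    simpa [fromBlocks_transpose, fromBlocks_neg] using congrArg toBlocks₂₂ hskew
  simp only [← conjTranspose_eq_transpose_of_trivial (P + _),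
    posDef_fromBlocks_iff_posDef_and_posDef_schur, exists_and_left]
  refine and_congr_right fun hS => ?_
  have hSsymm : Sᵀ = S := isHermitian_iff_isSymm.1 hS.isHermitian
  have hA := hS.isUnit_det_add_of_transpose_eq_neg hN
  have hAS : (S + N) + (S + N)ᵀ = (2 : ℝ) • S := by rw [transpose_add, hSsymm, hN]; module
  simp only [conjTranspose_eq_transpose_of_trivial,
    closedLoop_schur_complement_eq hA hS.det_pos.ne'.isUnit hSsymm hAS]
  constructor
  · rintro ⟨F, hF⟩
    exact hS.of_posDef_sub_mul_inv_mul_transpose hF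
  · intro hT
    obtain ⟨F, hF⟩ := exists_half_smul_transpose_mul_eq hA (-((G - P) * (S + N)⁻¹ * S + P))
    have hQ : (G - P) * (S + N)⁻¹ * S + (P + (1 / 2 : ℝ) • Fᵀ * (S + N)ᵀ) = 0 := by
      rw [hF]; abel
    exact ⟨F, by rwa [hQ, Matrix.zero_mul, Matrix.zero_mul, sub_zero]⟩

/-- Theorem 3.2: existence of a state feedback making the closed-loop pH
descriptor system strictly passive. -/
theorem ph_feedback_strict_passivity_iff
    {n m : ℕ}
    (E J R : Matrix (Fin n) (Fin n) ℝ)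
    (G P : Matrix (Fin n) (Fin m) ℝ)
    (S N : Matrix (Fin m) (Fin m) ℝ)
    (hE : E.PosSemidef)
    (hskew : (fromBlocks J G (-Gᵀ) N)ᵀ = -(fromBlocks J G (-Gᵀ) N))
    (hW : (fromBlocks R P Pᵀ S).PosSemidef) :
    (∃ F : Matrix (Fin m) (Fin n) ℝ,
      (fromBlocks
          (R - (1 / 2 : ℝ) • ((G - P) * F + Fᵀ * (G - P)ᵀ))
          (P + (1 / 2 : ℝ) • Fᵀ * (S + N)ᵀ)
          (P + (1 / 2 : ℝ) • Fᵀ * (S + N)ᵀ)ᵀ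
          S).PosDef)
    ↔
    (S.PosDef ∧
      (R + (1 / 2 : ℝ) • ((G - P) * (S + N)⁻¹ * (G + P)ᵀ)
         + (1 / 2 : ℝ) • ((G + P) * ((S + N)⁻¹)ᵀ * (G - P)ᵀ)).PosDef) :=
  ph_feedback_strict_passivity_iff_general J R G P S N hskew
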